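/- In the evaluation of any voting tree on a tournament T, if every leaf label belongs to a set R ∪ {i} where every element of R beats i in T, and at least one leaf label lies in R, then the winner of the tree lies in R. -/
import Mathlib


/-- A voting tree: a binary tree whose leaves are labeled by candidates. -/
inductive VTree (α : Type) : Type
  | leaf : α → VTree α
  | node : VTree α → VTree α → VTree α

namespace VTree

variable {α β : Type}

/-- Evaluate a voting tree on the `beats` relation `T`: at each internal node the
child's label that beats the other propagates (a label beats itself since `T` is
irreflexive for tournaments). -/
def eval (T : α → α → Bool) : VTree α → α
  | leaf a => a
  | node l r => if T (eval T l) (eval T r) then eval T l else eval T r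

/-- The list of leaf labels, left to right. -/
def leaves : VTree α → List α
  | leaf a => [a]
  | node l r => leaves l ++ leaves r

/-- Relabel the leaves of a voting tree. -/
def map (f : α → β) : VTree α → VTree β
  | leaf a => leaf (f a)
  | node l r => node (map f l) (map f r)

/-- Substitute a voting tree for each leaf. -/
def bind : VTree α → (α → VTree β) → VTree β
  | leaf a, f => f a
  | node l r, f => node (bind l f) (bind r f)

/-- The complete binary tree of depth `d` whose leaves, left to right, are
`f 0, f 1, …, f (2^d - 1)`. -/
def completeTree (f : ℕ → α) : ℕ → VTree α
  | 0 => leaf (f 0)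
  | d + 1 => node (completeTree f d) (completeTree (fun i => f (i + 2 ^ d)) d)

/-- Pair up adjacent trees in a list by a match. -/
def pairUp : List (VTree α) → List (VTree α)
  | a :: b :: rest => node a b :: pairUp rest
  | l => l

theorem pairUp_length : ∀ l : List (VTree α), (pairUp l).length = (l.length + 1) / 2
  | [] => by simp [pairUp]
  | [_] => by simp [pairUp]
  | a :: b :: rest => by
      simp only [pairUp, List.length_cons, pairUp_length rest]
      omega

/-- Play off a list of trees in a balanced binary fashion (round-robin of rounds). -/
def roundRobin (d : VTree α) : List (VTree α) → VTree α
  | [] => d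
  | [t] => t
  | t₁ :: t₂ :: rest => roundRobin d (pairUp (t₁ :: t₂ :: rest))
  termination_by l => l.length
  decreasing_by simp only [pairUp_length, List.length_cons]; omega

/-- The voting tree `Λ_{i:S}`: one leaf-pair `(i, s)` for each `s` in the list `S`,
with the match winners played off in a balanced binary tree. -/
def lambdaTree (i : α) (S : List α) : VTree α :=
  roundRobin (leaf i) (S.map fun s => node (leaf i) (leaf s))

end VTree

/-- A tournament: an irreflexive relation such that for distinct `a`, `b`,
exactly one of `a` beats `b` or `b` beats `a` holds. -/
def IsTournament {α : Type} (T : α → α → Bool) : Prop :=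
  (∀ a, T a a = false) ∧ ∀ a b : α, a ≠ b → T a b = !T b a

/-- The out-degree of a vertex in a tournament on `Fin n`. -/
def outDeg {n : ℕ} (T : Fin n → Fin n → Bool) (v : Fin n) : ℕ :=
  (Finset.univ.filter fun w => T v w).card

theorem VTree.eval_mem_leaves {α : Type} (T : α → α → Bool) :
    ∀ t : VTree α, t.eval T ∈ t.leaves
  | .leaf a => by simp [VTree.eval, VTree.leaves]
  | .node l r => by
      simp only [VTree.eval, VTree.leaves, List.mem_append]
      split
      · exact Or.inl (eval_mem_leaves T l)
      · exact Or.inr (eval_mem_leaves T r)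

/-- If every leaf label of a voting tree lies in `R ∪ {i}`, where every element
of `R` beats `i`, and some leaf label lies in `R`, then the winner lies in `R`. -/
theorem eval_mem_of_leaves_subset {α : Type} (T : α → α → Bool) (hT : IsTournament T)
    (t : VTree α) (R : Set α) (i : α) (hi : i ∉ R) (hbeats : ∀ r ∈ R, T r i)
    (hleaves : ∀ l ∈ t.leaves, l ∈ R ∪ {i}) (hex : ∃ l ∈ t.leaves, l ∈ R) :
    t.eval T ∈ R := by
  induction t with
  | leaf a =>
      obtain ⟨l, hl, hlR⟩ := hex
      simp [VTree.leaves] at hl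
      subst hl
      simpa [VTree.eval] using hlR
  | node l r ihl ihr =>
      have hml : ∀ x ∈ l.leaves, x ∈ R ∪ {i} := fun x hx =>
        hleaves x (by simp [VTree.leaves, hx])
      have hmr : ∀ x ∈ r.leaves, x ∈ R ∪ {i} := fun x hx =>
        hleaves x (by simp [VTree.leaves, hx])
      have hel : l.eval T ∈ R ∪ {i} := hml _ (VTree.eval_mem_leaves T l)
      have her : r.eval T ∈ R ∪ {i} := hmr _ (VTree.eval_mem_leaves T r)
      have key : ∀ a b : α, a ∈ R → b ∈ R ∪ {i} →
          (if T a b then a else b) ∈ R := by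
        intro a b ha hb
        rcases hb with hb | hb
        · split <;> assumption
        · simp only [Set.mem_singleton_iff] at hb; subst hb
          have hab : a ≠ b := fun h => hi (h ▸ ha)
          have : T a b = true := hbeats a ha
          simp [this, ha]
      have key' : ∀ a b : α, a ∈ R ∪ {i} → b ∈ R →
          (if T a b then a else b) ∈ R := by
        intro a b ha hb
        rcases ha with ha | ha
        · split <;> assumption
        · simp only [Set.mem_singleton_iff] at ha; subst ha
          have hba : b ≠ a := fun h => hi (h ▸ hb)
          have h1 : T b a = true := hbeats b hb
          have h2 : T a b = false := by
            have := hT.2 a b (Ne.symm hba)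
            rw [this, h1]; rfl
          simp [h2, hb]
      obtain ⟨x, hx, hxR⟩ := hex
      simp only [VTree.leaves, List.mem_append] at hx
      simp only [VTree.eval]
      rcases hx with hx | hx
      · exact key _ _ (ihl hml ⟨x, hx, hxR⟩) her
      · exact key' _ _ hel (ihr hmr ⟨x, hx, hxR⟩)
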